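/- Every vacuum state ω_{v,w} on the extended CAR algebra over ℂ² with U(2) symmetry admits the extremal decomposition ω_{v,w} = w ω_{1,1} + (1 - 2v + w) ω_{0,0} + 2(v - w) ω_{½,0}, and the coefficients w, 1 - 2v + w, 2(v - w) are nonnegative and sum to 1 whenever 1 ≥ v ≥ w ≥ 0 and w ≥ 2v - 1. -/
import Mathlib


open ComplexOrder

/-- The defining relations of the extended CAR algebra over `ℂ²` with
implemented `U(2)` symmetry: CAR relations for `c₁, c₂`, the particle number
`N`, and the spin generators `S₁, S₂, S₃` (Pauli-matrix commutation relations
with the fields, `su(2)` relations, and `[N, Sᵏ] = 0`). -/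
structure CARRel2 {A : Type*} [Ring A] [Algebra ℂ A] [StarRing A]
    (c₁ c₂ N S₁ S₂ S₃ : A) : Prop where
  acc11 : c₁ * c₁ + c₁ * c₁ = 0
  acc12 : c₁ * c₂ + c₂ * c₁ = 0
  acc22 : c₂ * c₂ + c₂ * c₂ = 0
  car11 : star c₁ * c₁ + c₁ * star c₁ = 1
  car12 : star c₁ * c₂ + c₂ * star c₁ = 0
  car21 : star c₂ * c₁ + c₁ * star c₂ = 0
  car22 : star c₂ * c₂ + c₂ * star c₂ = 1
  Nsa : star N = N
  Nc1 : N * c₁ - c₁ * N = -c₁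
  Nc2 : N * c₂ - c₂ * N = -c₂
  S1sa : star S₁ = S₁
  S2sa : star S₂ = S₂
  S3sa : star S₃ = S₃
  S1c1 : S₁ * c₁ - c₁ * S₁ = c₂
  S1c2 : S₁ * c₂ - c₂ * S₁ = c₁
  S2c1 : S₂ * c₁ - c₁ * S₂ = -(Complex.I • c₂)
  S2c2 : S₂ * c₂ - c₂ * S₂ = Complex.I • c₁
  S3c1 : S₃ * c₁ - c₁ * S₃ = c₁
  S3c2 : S₃ * c₂ - c₂ * S₃ = -c₂
  S12 : S₁ * S₂ - S₂ * S₁ = Complex.I • S₃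
  S23 : S₂ * S₃ - S₃ * S₂ = Complex.I • S₁
  S31 : S₃ * S₁ - S₁ * S₃ = Complex.I • S₂
  NS1 : N * S₁ = S₁ * N
  NS2 : N * S₂ = S₂ * N
  NS3 : N * S₃ = S₃ * N

/-- A vacuum state on the extended CAR algebra over `ℂ²`: a linear,
normalized, positive functional annihilating `A N` and `A Sᵏ`. -/
structure VacState2 {A : Type*} [Ring A] [Algebra ℂ A] [StarRing A]
    (N S₁ S₂ S₃ : A) where
  val : A →ₗ[ℂ] ℂ
  normalized : val 1 = 1
  positive : ∀ a : A, 0 ≤ val (star a * a)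
  vacN : ∀ a : A, val (a * N) = 0
  vacS1 : ∀ a : A, val (a * S₁) = 0
  vacS2 : ∀ a : A, val (a * S₂) = 0
  vacS3 : ∀ a : A, val (a * S₃) = 0

private lemma half_zero {A : Type*} [Ring A] [Algebra ℂ A] (x : A) (h : x + x = 0) : x = 0 := by
  have h2 : (2:ℂ) • x = 0 := by rw [two_smul]; exact h
  have h3 : ((2:ℂ)⁻¹ * 2) • x = 0 := by rw [mul_smul, h2, smul_zero]
  norm_num at h3
  exact h3

private lemma comm_push {A : Type*} [Ring A] {X y z : A} (h : X * y - y * X = z) :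
    X * y = y * X + z := by
  rw [sub_eq_iff_eq_add] at h
  rw [h]; exact add_comm _ _

private lemma comm_push_ext {A : Type*} [Ring A] {X y z : A} (h : X * y - y * X = z) (x : A) :
    X * (y * x) = y * (X * x) + z * x := by
  rw [← mul_assoc, comm_push h, add_mul, mul_assoc]

private lemma comm_star {A : Type*} [Ring A] [StarRing A] {X y z : A} (hX : star X = X)
    (h : X * y - y * X = z) : X * star y - star y * X = -(star z) := by
  have h2 := congrArg star h
  simp only [star_sub, star_mul, hX] at h2
  rw [← neg_sub (star y * X) (X * star y), h2]

private lemma state_herm {A : Type*} [Ring A] [Algebra ℂ A] [StarRing A] [StarModule ℂ A]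
    {N S₁ S₂ S₃ : A} (ω : VacState2 N S₁ S₂ S₃) (x : A) :
    ω.val (star x) = (starRingEnd ℂ) (ω.val x) := by
  have him : ∀ a : A, (ω.val (star a * a)).im = 0 := fun a =>
    ((Complex.le_def.mp (ω.positive a)).2).symm
  have e1 : star (1 + x) * (1 + x) = 1 + (x + (star x + star x * x)) := by
    rw [star_add, star_one, add_mul, one_mul, mul_add, mul_one, add_assoc]
  have h1 := him (1 + x)
  rw [e1] at h1
  simp only [map_add, ω.normalized, Complex.add_im, Complex.one_im, him x] at h1
  have hmm : ((-Complex.I) • star x) * (Complex.I • x) = star x * x := by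
    rw [smul_mul_assoc, mul_smul_comm, smul_smul]
    norm_num [Complex.I_mul_I]
  have e2 : star (1 + Complex.I • x) * (1 + Complex.I • x)
      = 1 + (Complex.I • x + ((-Complex.I) • star x + star x * x)) := by
    rw [star_add, star_one, star_smul]
    rw [show (star Complex.I : ℂ) = -Complex.I from Complex.conj_I]
    rw [add_mul, one_mul, mul_add, mul_one, hmm, add_assoc]
  have h2 := him (1 + Complex.I • x)
  rw [e2] at h2
  simp only [map_add, map_smul, ω.normalized, smul_eq_mul, Complex.add_im, Complex.one_im,
    Complex.mul_im, Complex.I_re, Complex.I_im, Complex.neg_re, Complex.neg_im, him x] at h2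
  apply Complex.ext
  · simp only [Complex.conj_re]; linarith
  · simp only [Complex.conj_im]; linarith

set_option maxHeartbeats 800000000 in
/-- Every vacuum state `ω_{v,w}` on the extended CAR algebra over
`ℂ²` decomposes as `ω_{v,w} = w ω_{1,1} + (1-2v+w) ω_{0,0} + 2(v-w) ω_{½,0}`,
and the coefficients are nonnegative and sum to `1` whenever
`1 ≥ v ≥ w ≥ 0` and `w ≥ 2v - 1`. -/
theorem vacuum_state_extremal_decomposition_C2
    {A : Type*} [Ring A] [Algebra ℂ A] [StarRing A] [StarModule ℂ A]
    (c₁ c₂ N S₁ S₂ S₃ : A)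
    (hrel : CARRel2 c₁ c₂ N S₁ S₂ S₃)
    (hgen : Algebra.adjoin ℂ {c₁, c₂, star c₁, star c₂, N, S₁, S₂, S₃} = ⊤)
    (v w : ℝ)
    (hv1 : 1 ≥ v) (hvw : v ≥ w) (hw0 : w ≥ 0) (hw2v : w ≥ 2 * v - 1)
    (ωvw ω11 ω00 ωh : VacState2 N S₁ S₂ S₃)
    (hvwv : ωvw.val (c₁ * star c₁) = (v : ℂ))
    (hvww : ωvw.val (c₁ * c₂ * star c₂ * star c₁) = (w : ℂ))
    (h11v : ω11.val (c₁ * star c₁) = 1)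
    (h11w : ω11.val (c₁ * c₂ * star c₂ * star c₁) = 1)
    (h00v : ω00.val (c₁ * star c₁) = 0)
    (h00w : ω00.val (c₁ * c₂ * star c₂ * star c₁) = 0)
    (hhv : ωh.val (c₁ * star c₁) = 1 / 2)
    (hhw : ωh.val (c₁ * c₂ * star c₂ * star c₁) = 0) :
    (0 ≤ w ∧ 0 ≤ 1 - 2 * v + w ∧ 0 ≤ 2 * (v - w) ∧
      w + (1 - 2 * v + w) + 2 * (v - w) = 1) ∧
    (∀ a : A, ωvw.val a =
      (w : ℂ) * ω11.val a + ((1 : ℂ) - 2 * v + w) * ω00.val a +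
        2 * ((v : ℂ) - w) * ωh.val a) := by
  -- derived CAR rewrite rules
  have r11 : c₁ * c₁ = 0 := half_zero _ hrel.acc11
  have r22 : c₂ * c₂ = 0 := half_zero _ hrel.acc22
  have r21 : c₂ * c₁ = -(c₁ * c₂) := eq_neg_of_add_eq_zero_right hrel.acc12
  have rs11 : star c₁ * star c₁ = (0:A) := by rw [← star_mul, r11, star_zero]
  have rs22 : star c₂ * star c₂ = (0:A) := by rw [← star_mul, r22, star_zero]
  have rs12 : star c₁ * star c₂ = -(star c₂ * star c₁) := by
    rw [← star_mul, r21, star_neg, star_mul]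
  have t11 : star c₁ * c₁ = 1 - c₁ * star c₁ := eq_sub_of_add_eq hrel.car11
  have t12 : star c₁ * c₂ = -(c₂ * star c₁) := eq_neg_of_add_eq_zero_left hrel.car12
  have t21 : star c₂ * c₁ = -(c₁ * star c₂) := eq_neg_of_add_eq_zero_left hrel.car21
  have t22 : star c₂ * c₂ = 1 - c₂ * star c₂ := eq_sub_of_add_eq hrel.car22
  have r11x : ∀ x : A, c₁ * (c₁ * x) = 0 := fun x => by rw [← mul_assoc, r11, zero_mul]
  have r22x : ∀ x : A, c₂ * (c₂ * x) = 0 := fun x => by rw [← mul_assoc, r22, zero_mul]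
  have r21x : ∀ x : A, c₂ * (c₁ * x) = -(c₁ * (c₂ * x)) := fun x => by
    rw [← mul_assoc, r21, neg_mul, mul_assoc]
  have rs11x : ∀ x : A, star c₁ * (star c₁ * x) = 0 := fun x => by
    rw [← mul_assoc, rs11, zero_mul]
  have rs22x : ∀ x : A, star c₂ * (star c₂ * x) = 0 := fun x => by
    rw [← mul_assoc, rs22, zero_mul]
  have rs12x : ∀ x : A, star c₁ * (star c₂ * x) = -(star c₂ * (star c₁ * x)) := fun x => by
    rw [← mul_assoc, rs12, neg_mul, mul_assoc]
  have t11x : ∀ x : A, star c₁ * (c₁ * x) = x - c₁ * (star c₁ * x) := fun x => by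
    rw [← mul_assoc, t11, sub_mul, one_mul, mul_assoc]
  have t12x : ∀ x : A, star c₁ * (c₂ * x) = -(c₂ * (star c₁ * x)) := fun x => by
    rw [← mul_assoc, t12, neg_mul, mul_assoc]
  have t21x : ∀ x : A, star c₂ * (c₁ * x) = -(c₁ * (star c₂ * x)) := fun x => by
    rw [← mul_assoc, t21, neg_mul, mul_assoc]
  have t22x : ∀ x : A, star c₂ * (c₂ * x) = x - c₂ * (star c₂ * x) := fun x => by
    rw [← mul_assoc, t22, sub_mul, one_mul, mul_assoc]
  -- commutators with starred generators
  have hNd1 : N * star c₁ - star c₁ * N = star c₁ := by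
    have h := comm_star hrel.Nsa hrel.Nc1; rwa [star_neg, neg_neg] at h
  have hNd2 : N * star c₂ - star c₂ * N = star c₂ := by
    have h := comm_star hrel.Nsa hrel.Nc2; rwa [star_neg, neg_neg] at h
  have hS1d1 : S₁ * star c₁ - star c₁ * S₁ = -(star c₂) := comm_star hrel.S1sa hrel.S1c1
  have hS1d2 : S₁ * star c₂ - star c₂ * S₁ = -(star c₁) := comm_star hrel.S1sa hrel.S1c2
  have hS2d1 : S₂ * star c₁ - star c₁ * S₂ = -(Complex.I • star c₂) := by
    have h := comm_star hrel.S2sa hrel.S2c1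
    simpa [star_neg, star_smul, Complex.star_def, Complex.conj_I, neg_smul, neg_neg] using h
  have hS2d2 : S₂ * star c₂ - star c₂ * S₂ = Complex.I • star c₁ := by
    have h := comm_star hrel.S2sa hrel.S2c2
    simpa [star_neg, star_smul, Complex.star_def, Complex.conj_I, neg_smul, neg_neg] using h
  have hS3d1 : S₃ * star c₁ - star c₁ * S₃ = -(star c₁) := comm_star hrel.S3sa hrel.S3c1
  have hS3d2 : S₃ * star c₂ - star c₂ * S₃ = star c₂ := by
    have h := comm_star hrel.S3sa hrel.S3c2; rwa [star_neg, neg_neg] at h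
  -- push rules
  have pN1b := comm_push hrel.Nc1
  have pN1x := comm_push_ext hrel.Nc1
  have pN2b := comm_push hrel.Nc2
  have pN2x := comm_push_ext hrel.Nc2
  have pNd1b := comm_push hNd1
  have pNd1x := comm_push_ext hNd1
  have pNd2b := comm_push hNd2
  have pNd2x := comm_push_ext hNd2
  have pS11b := comm_push hrel.S1c1
  have pS11x := comm_push_ext hrel.S1c1
  have pS12b := comm_push hrel.S1c2
  have pS12x := comm_push_ext hrel.S1c2
  have pS1d1b := comm_push hS1d1
  have pS1d1x := comm_push_ext hS1d1
  have pS1d2b := comm_push hS1d2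
  have pS1d2x := comm_push_ext hS1d2
  have pS21b := comm_push hrel.S2c1
  have pS21x := comm_push_ext hrel.S2c1
  have pS22b := comm_push hrel.S2c2
  have pS22x := comm_push_ext hrel.S2c2
  have pS2d1b := comm_push hS2d1
  have pS2d1x := comm_push_ext hS2d1
  have pS2d2b := comm_push hS2d2
  have pS2d2x := comm_push_ext hS2d2
  have pS31b := comm_push hrel.S3c1
  have pS31x := comm_push_ext hrel.S3c1
  have pS32b := comm_push hrel.S3c2
  have pS32x := comm_push_ext hrel.S3c2
  have pS3d1b := comm_push hS3d1
  have pS3d1x := comm_push_ext hS3d1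
  have pS3d2b := comm_push hS3d2
  have pS3d2x := comm_push_ext hS3d2
  -- identities used for value computations
  have eA3 : N * (c₁ * c₂) = c₁ * c₂ * N - (c₁ * c₂ + c₁ * c₂) := by
    simp only [pN1x, pN2b]; noncomm_ring
  have eA4 : S₃ * (c₁ * star c₂) = c₁ * star c₂ * S₃ + (c₁ * star c₂ + c₁ * star c₂) := by
    simp only [pS31x, pS3d2b]; noncomm_ring
  have eA5 : S₁ * (c₁ * star c₂) = c₁ * star c₂ * S₁ + (c₂ * star c₂ - c₁ * star c₁) := by
    simp only [pS11x, pS1d2b]; noncomm_ring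
  have eA6 : N * (c₁ * (c₂ * star c₁)) = c₁ * (c₂ * star c₁) * N - c₁ * (c₂ * star c₁) := by
    simp only [pN1x, pN2x, pNd1b]; noncomm_ring
  have eA7 : N * (c₁ * (c₂ * star c₂)) = c₁ * (c₂ * star c₂) * N - c₁ * (c₂ * star c₂) := by
    simp only [pN1x, pN2x, pNd2b]; noncomm_ring
  have eA8 : N * (c₁ * (star c₂ * star c₁)) =
      c₁ * (star c₂ * star c₁) * N + c₁ * (star c₂ * star c₁) := by
    simp only [pN1x, pNd2x, pNd1b]; noncomm_ring
  have eA9 : N * (c₂ * (star c₂ * star c₁)) =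
      c₂ * (star c₂ * star c₁) * N + c₂ * (star c₂ * star c₁) := by
    simp only [pN2x, pNd2x, pNd1b]; noncomm_ring
  -- values of a general vacuum state on the CAR monomials
  have hvan : ∀ ω : VacState2 N S₁ S₂ S₃,
      ω.val c₁ = 0 ∧ ω.val c₂ = 0 ∧ ω.val (star c₁) = 0 ∧ ω.val (star c₂) = 0 ∧
      ω.val (c₁ * c₂) = 0 ∧ ω.val (star c₂ * star c₁) = 0 ∧
      ω.val (c₁ * star c₂) = 0 ∧ ω.val (c₂ * star c₁) = 0 ∧
      ω.val (c₂ * star c₂) = ω.val (c₁ * star c₁) ∧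
      ω.val (c₁ * (c₂ * star c₁)) = 0 ∧ ω.val (c₁ * (c₂ * star c₂)) = 0 ∧
      ω.val (c₁ * (star c₂ * star c₁)) = 0 ∧ ω.val (c₂ * (star c₂ * star c₁)) = 0 := by
    intro ω
    have hrm := state_herm ω
    have hNl : ∀ a : A, ω.val (N * a) = 0 := by
      intro a
      have h1 : star (star a * N) = N * a := by rw [star_mul, star_star, hrel.Nsa]
      calc ω.val (N * a) = ω.val (star (star a * N)) := by rw [h1]
        _ = 0 := by rw [hrm, ω.vacN, map_zero]
    have hS1l : ∀ a : A, ω.val (S₁ * a) = 0 := by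
      intro a
      have h1 : star (star a * S₁) = S₁ * a := by rw [star_mul, star_star, hrel.S1sa]
      calc ω.val (S₁ * a) = ω.val (star (star a * S₁)) := by rw [h1]
        _ = 0 := by rw [hrm, ω.vacS1, map_zero]
    have hS3l : ∀ a : A, ω.val (S₃ * a) = 0 := by
      intro a
      have h1 : star (star a * S₃) = S₃ * a := by rw [star_mul, star_star, hrel.S3sa]
      calc ω.val (S₃ * a) = ω.val (star (star a * S₃)) := by rw [h1]
        _ = 0 := by rw [hrm, ω.vacS3, map_zero]
    have hc1 : ω.val c₁ = 0 := by
      have h := congrArg ω.val pS31b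
      simp only [map_add, map_neg, map_sub, hS3l, ω.vacS3, zero_add] at h
      first | exact h.symm | linear_combination h | linear_combination -h
    have hc2 : ω.val c₂ = 0 := by
      have h := congrArg ω.val pS32b
      simp only [map_add, map_neg, map_sub, hS3l, ω.vacS3, zero_add] at h
      first | exact h.symm | linear_combination h | linear_combination -h
    have hd1 : ω.val (star c₁) = 0 := by rw [hrm, hc1, map_zero]
    have hd2 : ω.val (star c₂) = 0 := by rw [hrm, hc2, map_zero]
    have hc12 : ω.val (c₁ * c₂) = 0 := by
      have h := congrArg ω.val eA3
      simp only [map_add, map_neg, map_sub, hNl, ω.vacN, zero_sub, zero_add] at h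
      first | exact h.symm | linear_combination h | linear_combination -h |
        linear_combination h / 2 | linear_combination -h / 2
    have hsd21 : ω.val (star c₂ * star c₁) = 0 := by
      have e : star (c₁ * c₂) = star c₂ * star c₁ := star_mul _ _
      rw [← e, hrm, hc12, map_zero]
    have hc1d2 : ω.val (c₁ * star c₂) = 0 := by
      have h := congrArg ω.val eA4
      simp only [map_add, map_neg, map_sub, hS3l, ω.vacS3, zero_add] at h
      first | exact h.symm | linear_combination h | linear_combination -h |
        linear_combination h / 2 | linear_combination -h / 2
    have hc2d1 : ω.val (c₂ * star c₁) = 0 := by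
      have e : star (c₁ * star c₂) = c₂ * star c₁ := by rw [star_mul, star_star]
      rw [← e, hrm, hc1d2, map_zero]
    have hc2d2 : ω.val (c₂ * star c₂) = ω.val (c₁ * star c₁) := by
      have h := congrArg ω.val eA5
      simp only [map_add, map_neg, map_sub, hS1l, ω.vacS1, zero_add] at h
      first | linear_combination h | linear_combination -h
    have h3a : ω.val (c₁ * (c₂ * star c₁)) = 0 := by
      have h := congrArg ω.val eA6
      simp only [map_add, map_neg, map_sub, hNl, ω.vacN, zero_sub, zero_add] at h
      first | exact h.symm | linear_combination h | linear_combination -h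
    have h3b : ω.val (c₁ * (c₂ * star c₂)) = 0 := by
      have h := congrArg ω.val eA7
      simp only [map_add, map_neg, map_sub, hNl, ω.vacN, zero_sub, zero_add] at h
      first | exact h.symm | linear_combination h | linear_combination -h
    have h3c : ω.val (c₁ * (star c₂ * star c₁)) = 0 := by
      have h := congrArg ω.val eA8
      simp only [map_add, map_neg, map_sub, hNl, ω.vacN, zero_sub, zero_add] at h
      first | exact h.symm | linear_combination h | linear_combination -h
    have h3d : ω.val (c₂ * (star c₂ * star c₁)) = 0 := by
      have h := congrArg ω.val eA9
      simp only [map_add, map_neg, map_sub, hNl, ω.vacN, zero_sub, zero_add] at h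
      first | exact h.symm | linear_combination h | linear_combination -h
    exact ⟨hc1, hc2, hd1, hd2, hc12, hsd21, hc1d2, hc2d1, hc2d2, h3a, h3b, h3c, h3d⟩
  obtain ⟨P1, P2, P3, P4, P5, P6, P7, P8, P9, P10, P11, P12, P13⟩ := hvan ωvw
  obtain ⟨Q1, Q2, Q3, Q4, Q5, Q6, Q7, Q8, Q9, Q10, Q11, Q12, Q13⟩ := hvan ω11
  obtain ⟨U1, U2, U3, U4, U5, U6, U7, U8, U9, U10, U11, U12, U13⟩ := hvan ω00
  obtain ⟨T1, T2, T3, T4, T5, T6, T7, T8, T9, T10, T11, T12, T13⟩ := hvan ωh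
  have hassoc : c₁ * c₂ * star c₂ * star c₁ = c₁ * (c₂ * (star c₂ * star c₁)) := by
    simp only [mul_assoc]
  have hvww' : ωvw.val (c₁ * (c₂ * (star c₂ * star c₁))) = (w : ℂ) := by
    rw [← hassoc]; exact hvww
  have h11w' : ω11.val (c₁ * (c₂ * (star c₂ * star c₁))) = 1 := by
    rw [← hassoc]; exact h11w
  have h00w' : ω00.val (c₁ * (c₂ * (star c₂ * star c₁))) = 0 := by
    rw [← hassoc]; exact h00w
  have hhw' : ωh.val (c₁ * (c₂ * (star c₂ * star c₁))) = 0 := by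
    rw [← hassoc]; exact hhw
  -- the spanning submodule
  set Bs : Set A := {1, c₁, c₂, c₁ * c₂, star c₁, star c₂, star c₂ * star c₁,
    c₁ * star c₁, c₁ * star c₂, c₂ * star c₁, c₂ * star c₂,
    c₁ * (c₂ * star c₁), c₁ * (c₂ * star c₂), c₁ * (star c₂ * star c₁),
    c₂ * (star c₂ * star c₁), c₁ * (c₂ * (star c₂ * star c₁))} with hBdef
  set Rs : Set A := {x | ∃ a : A, x = a * N ∨ x = a * S₁ ∨ x = a * S₂ ∨ x = a * S₃} with hRdef
  set M : Submodule ℂ A := Submodule.span ℂ (Bs ∪ Rs) with hMdef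
  have hbmem : ∀ x ∈ Bs, x ∈ M := fun x hx =>
    hMdef ▸ Submodule.subset_span (Set.mem_union_left _ hx)
  have hb1 : (1:A) ∈ M := hbmem _ (by rw [hBdef]; simp)
  have hb2 : c₁ ∈ M := hbmem _ (by rw [hBdef]; simp)
  have hb3 : c₂ ∈ M := hbmem _ (by rw [hBdef]; simp)
  have hb4 : c₁ * c₂ ∈ M := hbmem _ (by rw [hBdef]; simp)
  have hb5 : star c₁ ∈ M := hbmem _ (by rw [hBdef]; simp)
  have hb6 : star c₂ ∈ M := hbmem _ (by rw [hBdef]; simp)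
  have hb7 : star c₂ * star c₁ ∈ M := hbmem _ (by rw [hBdef]; simp)
  have hb8 : c₁ * star c₁ ∈ M := hbmem _ (by rw [hBdef]; simp)
  have hb9 : c₁ * star c₂ ∈ M := hbmem _ (by rw [hBdef]; simp)
  have hb10 : c₂ * star c₁ ∈ M := hbmem _ (by rw [hBdef]; simp)
  have hb11 : c₂ * star c₂ ∈ M := hbmem _ (by rw [hBdef]; simp)
  have hb12 : c₁ * (c₂ * star c₁) ∈ M := hbmem _ (by rw [hBdef]; simp)
  have hb13 : c₁ * (c₂ * star c₂) ∈ M := hbmem _ (by rw [hBdef]; simp)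
  have hb14 : c₁ * (star c₂ * star c₁) ∈ M := hbmem _ (by rw [hBdef]; simp)
  have hb15 : c₂ * (star c₂ * star c₁) ∈ M := hbmem _ (by rw [hBdef]; simp)
  have hb16 : c₁ * (c₂ * (star c₂ * star c₁)) ∈ M := hbmem _ (by rw [hBdef]; simp)
  have hRmem : ∀ x ∈ Rs, x ∈ M := fun x hx =>
    hMdef ▸ Submodule.subset_span (Set.mem_union_right _ hx)
  have hIN1 : ∀ a : A, a * N ∈ M := fun a => hRmem _ (by rw [hRdef]; exact ⟨a, Or.inl rfl⟩)
  have hIS11 : ∀ a : A, a * S₁ ∈ M := fun a =>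
    hRmem _ (by rw [hRdef]; exact ⟨a, Or.inr (Or.inl rfl)⟩)
  have hIS21 : ∀ a : A, a * S₂ ∈ M := fun a =>
    hRmem _ (by rw [hRdef]; exact ⟨a, Or.inr (Or.inr (Or.inl rfl))⟩)
  have hIS31 : ∀ a : A, a * S₃ ∈ M := fun a =>
    hRmem _ (by rw [hRdef]; exact ⟨a, Or.inr (Or.inr (Or.inr rfl))⟩)
  have hIN2 : ∀ a b : A, a * (b * N) ∈ M := fun a b => by rw [← mul_assoc]; exact hIN1 _
  have hIN3 : ∀ a b e : A, a * (b * (e * N)) ∈ M := fun a b e => by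
    rw [← mul_assoc]; exact hIN2 _ _
  have hIN4 : ∀ a b e f : A, a * (b * (e * (f * N))) ∈ M := fun a b e f => by
    rw [← mul_assoc]; exact hIN3 _ _ _
  have hIS12 : ∀ a b : A, a * (b * S₁) ∈ M := fun a b => by rw [← mul_assoc]; exact hIS11 _
  have hIS13 : ∀ a b e : A, a * (b * (e * S₁)) ∈ M := fun a b e => by
    rw [← mul_assoc]; exact hIS12 _ _
  have hIS14 : ∀ a b e f : A, a * (b * (e * (f * S₁))) ∈ M := fun a b e f => by
    rw [← mul_assoc]; exact hIS13 _ _ _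
  have hIS22 : ∀ a b : A, a * (b * S₂) ∈ M := fun a b => by rw [← mul_assoc]; exact hIS21 _
  have hIS23 : ∀ a b e : A, a * (b * (e * S₂)) ∈ M := fun a b e => by
    rw [← mul_assoc]; exact hIS22 _ _
  have hIS24 : ∀ a b e f : A, a * (b * (e * (f * S₂))) ∈ M := fun a b e f => by
    rw [← mul_assoc]; exact hIS23 _ _ _
  have hIS32 : ∀ a b : A, a * (b * S₃) ∈ M := fun a b => by rw [← mul_assoc]; exact hIS31 _
  have hIS33 : ∀ a b e : A, a * (b * (e * S₃)) ∈ M := fun a b e => by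
    rw [← mul_assoc]; exact hIS32 _ _
  have hIS34 : ∀ a b e f : A, a * (b * (e * (f * S₃))) ∈ M := fun a b e f => by
    rw [← mul_assoc]; exact hIS33 _ _ _
  have hN0 : N ∈ M := by simpa using hIN1 1
  have hS10 : S₁ ∈ M := by simpa using hIS11 1
  have hS20 : S₂ ∈ M := by simpa using hIS21 1
  have hS30 : S₃ ∈ M := by simpa using hIS31 1
  have hzero : (0:A) ∈ M := M.zero_mem
  have hadd : ∀ x y : A, x ∈ M → y ∈ M → x + y ∈ M := fun _ _ hx hy => M.add_mem hx hy
  have hsub : ∀ x y : A, x ∈ M → y ∈ M → x - y ∈ M := fun _ _ hx hy => M.sub_mem hx hy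
  have hneg : ∀ x : A, x ∈ M → -x ∈ M := fun _ hx => M.neg_mem hx
  have hsmul : ∀ (r : ℂ) (x : A), x ∈ M → r • x ∈ M := fun r _ hx => M.smul_mem r hx
  -- M is invariant under left multiplication by the generators
  have hstep : ∀ g ∈ ({c₁, c₂, star c₁, star c₂, N, S₁, S₂, S₃} : Set A),
      ∀ x, x ∈ M → g * x ∈ M := by
    intro g hg x hx
    rw [hMdef] at hx
    induction hx using Submodule.span_induction with
    | mem t ht =>
      rcases ht with htB | htR
      · rw [hBdef] at htB
        simp only [Set.mem_insert_iff, Set.mem_singleton_iff] at hg htB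
        rcases hg with rfl|rfl|rfl|rfl|rfl|rfl|rfl|rfl <;>
        · rcases htB with rfl|rfl|rfl|rfl|rfl|rfl|rfl|rfl|rfl|rfl|rfl|rfl|rfl|rfl|rfl|rfl <;>
          · try simp only [pN1b, pN1x, pN2b, pN2x, pNd1b, pNd1x, pNd2b, pNd2x,
              pS11b, pS11x, pS12b, pS12x, pS1d1b, pS1d1x, pS1d2b, pS1d2x,
              pS21b, pS21x, pS22b, pS22x, pS2d1b, pS2d1x, pS2d2b, pS2d2x,
              pS31b, pS31x, pS32b, pS32x, pS3d1b, pS3d1x, pS3d2b, pS3d2x,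
              r11, r11x, r22, r22x, r21, r21x, rs11, rs11x, rs22, rs22x, rs12, rs12x,
              t11, t11x, t12, t12x, t21, t21x, t22, t22x,
              mul_one, one_mul, mul_zero, zero_mul, mul_add, mul_sub, mul_neg, neg_mul,
              neg_neg, add_mul, sub_mul, smul_mul_assoc, mul_smul_comm, smul_zero,
              zero_add, add_zero, sub_zero, zero_sub, neg_zero, smul_neg, neg_smul]
            repeat' (first
              | exact hzero | exact hb1 | exact hb2 | exact hb3 | exact hb4 | exact hb5
              | exact hb6 | exact hb7 | exact hb8 | exact hb9 | exact hb10 | exact hb11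
              | exact hb12 | exact hb13 | exact hb14 | exact hb15 | exact hb16
              | exact hN0 | exact hS10 | exact hS20 | exact hS30
              | exact hIN1 _ | exact hIN2 _ _ | exact hIN3 _ _ _ | exact hIN4 _ _ _ _
              | exact hIS11 _ | exact hIS12 _ _ | exact hIS13 _ _ _ | exact hIS14 _ _ _ _
              | exact hIS21 _ | exact hIS22 _ _ | exact hIS23 _ _ _ | exact hIS24 _ _ _ _
              | exact hIS31 _ | exact hIS32 _ _ | exact hIS33 _ _ _ | exact hIS34 _ _ _ _
              | apply hadd | apply hsub | apply hneg | apply hsmul)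
      · rw [hRdef] at htR
        obtain ⟨a, ha⟩ := htR
        rcases ha with rfl|rfl|rfl|rfl
        · rw [← mul_assoc]; exact hIN1 _
        · rw [← mul_assoc]; exact hIS11 _
        · rw [← mul_assoc]; exact hIS21 _
        · rw [← mul_assoc]; exact hIS31 _
    | zero => rw [mul_zero]; exact hzero
    | add y z hy hz ihy ihz => rw [mul_add]; exact hadd _ _ ihy ihz
    | smul r y hy ihy => rw [mul_smul_comm]; exact hsmul _ _ ihy
  -- every element lies in M
  have htop : ∀ x : A, x ∈ M := by
    have hsub1 : (Submonoid.closure ({c₁, c₂, star c₁, star c₂, N, S₁, S₂, S₃} : Set A) :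
        Set A) ⊆ (M : Set A) := by
      intro y hy
      replace hy : y ∈ Submonoid.closure ({c₁, c₂, star c₁, star c₂, N, S₁, S₂, S₃} : Set A) := hy
      induction hy using Submonoid.closure_induction_left with
      | one => exact hb1
      | mul_left g hg z hz ih => exact hstep g hg z ih
    intro x
    have h3 := Algebra.adjoin_eq_span (R := ℂ)
      (s := ({c₁, c₂, star c₁, star c₂, N, S₁, S₂, S₃} : Set A))
    rw [hgen, Algebra.top_toSubmodule] at h3
    have h2 : (⊤ : Submodule ℂ A) ≤ M := by
      rw [h3, hMdef]
      exact le_trans (Submodule.span_le.mpr hsub1) (le_of_eq hMdef.symm) |>.trans (le_of_eq hMdef)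
    exact h2 Submodule.mem_top
  -- the difference functional
  obtain ⟨φ, hφa⟩ : ∃ φ : A →ₗ[ℂ] ℂ, ∀ a : A, φ a =
      ωvw.val a - ((w:ℂ) * ω11.val a + ((1:ℂ) - 2*(v:ℂ) + (w:ℂ)) * ω00.val a +
        2*((v:ℂ) - (w:ℂ)) * ωh.val a) :=
    ⟨ωvw.val - ((w:ℂ) • ω11.val + ((1:ℂ) - 2*(v:ℂ) + (w:ℂ)) • ω00.val +
        (2*((v:ℂ) - (w:ℂ))) • ωh.val), fun a => by
      simp [LinearMap.sub_apply, LinearMap.add_apply, LinearMap.smul_apply, smul_eq_mul]⟩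
  have hker : M ≤ LinearMap.ker φ := by
    rw [hMdef]
    apply Submodule.span_le.mpr
    intro t ht
    simp only [SetLike.mem_coe, LinearMap.mem_ker]
    rcases ht with htB | htR
    · rw [hBdef] at htB
      simp only [Set.mem_insert_iff, Set.mem_singleton_iff] at htB
      rcases htB with rfl|rfl|rfl|rfl|rfl|rfl|rfl|rfl|rfl|rfl|rfl|rfl|rfl|rfl|rfl|rfl <;>
        simp only [hφa, ωvw.normalized, ω11.normalized, ω00.normalized, ωh.normalized,
          P1, P2, P3, P4, P5, P6, P7, P8, P9, P10, P11, P12, P13,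
          Q1, Q2, Q3, Q4, Q5, Q6, Q7, Q8, Q9, Q10, Q11, Q12, Q13,
          U1, U2, U3, U4, U5, U6, U7, U8, U9, U10, U11, U12, U13,
          T1, T2, T3, T4, T5, T6, T7, T8, T9, T10, T11, T12, T13,
          hvwv, h11v, h00v, hhv, hvww', h11w', h00w', hhw'] <;>
        ring
    · rw [hRdef] at htR
      obtain ⟨a, ha⟩ := htR
      rcases ha with rfl|rfl|rfl|rfl <;>
        simp [hφa, ωvw.vacN, ω11.vacN, ω00.vacN, ωh.vacN,
          ωvw.vacS1, ω11.vacS1, ω00.vacS1, ωh.vacS1,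
          ωvw.vacS2, ω11.vacS2, ω00.vacS2, ωh.vacS2,
          ωvw.vacS3, ω11.vacS3, ω00.vacS3, ωh.vacS3]
  refine ⟨⟨by linarith, by linarith, by linarith, by ring⟩, ?_⟩
  intro a
  have h0 : φ a = 0 := hker (htop a)
  have h1 := hφa a
  rw [h0] at h1
  linear_combination -h1
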